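/- Conversely, under the hypotheses of the verification inequality, if in addition a control u*(·) with trajectory x*(·) achieves equality V_t(t, x*(t)) + L(t, x*(t), u*(t)) + ⟨∇_x V(t, x*(t)), f(t, x*(t), u*(t))⟩ = 0 for all t, then V(t₀, x₀) = ∫_{t₀}^{t_f} L(t, x*(t), u*(t)) dt + ψ(x*(t_f)), i.e. u* is optimal and V is the value function at (t₀, x₀). -/

import Mathlib

open scoped RealInnerProductSpace

/-! Along the optimal trajectory the chain rule turns the equality case of the HJB inequality
into `d/dt V(t, x*(t)) = -L(t, x*(t), u*(t))`; integrating from `t₀` to `t_f` and using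
`V(t_f, ·) = ψ` gives the claimed value. -/

theorem hasDerivAt_comp_graph {E : Type*} [NormedAddCommGroup E] [InnerProductSpace ℝ E]
    [CompleteSpace E] {V : ℝ × E → ℝ} {γ : ℝ → E} {v : E}
    {t : ℝ} (hV : DifferentiableAt ℝ V (t, γ t)) (hγ : HasDerivAt γ v t) :
    HasDerivAt (fun s => V (s, γ s))
      (deriv (fun s => V (s, γ t)) t + ⟪gradient (fun y => V (t, y)) (γ t), v⟫) t := by
  set D := fderiv ℝ V (t, γ t)
  have hVd : HasFDerivAt V D (t, γ t) := hV.hasFDerivAt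
  have htime : HasDerivAt (fun s => V (s, γ t)) (D (1, 0)) t :=
    hVd.comp_hasDerivAt t ((hasDerivAt_id t).prodMk (hasDerivAt_const t (γ t)))
  have hspace : HasFDerivAt (fun y => V (t, y)) (D.comp (ContinuousLinearMap.inr ℝ ℝ E)) (γ t) :=
    hVd.comp (γ t) (hasFDerivAt_prodMk_right t (γ t))
  have hgrad : ⟪gradient (fun y => V (t, y)) (γ t), v⟫ = D (0, v) := by
    rw [gradient, hspace.fderiv]
    exact InnerProductSpace.toDual_symm_apply
  have hsplit : D (1, v) = D (1, 0) + D (0, v) := by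
    rw [← map_add, Prod.mk_add_mk, add_zero, zero_add]
  rw [htime.deriv, hgrad, ← hsplit]
  exact hVd.comp_hasDerivAt t ((hasDerivAt_id t).prodMk hγ)

theorem hjb_verification_equality_general {n m : ℕ}
    (t₀ tf : ℝ) (ht : t₀ ≤ tf)
    (L : ℝ → EuclideanSpace ℝ (Fin n) → EuclideanSpace ℝ (Fin m) → ℝ)
    (hL : Continuous fun q : ℝ × EuclideanSpace ℝ (Fin n) × EuclideanSpace ℝ (Fin m) =>
      L q.1 q.2.1 q.2.2)
    (f : ℝ → EuclideanSpace ℝ (Fin n) → EuclideanSpace ℝ (Fin m) →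
      EuclideanSpace ℝ (Fin n))
    (ψ : EuclideanSpace ℝ (Fin n) → ℝ)
    (V : ℝ × EuclideanSpace ℝ (Fin n) → ℝ) (hV : ContDiff ℝ 1 V)
    (hVtf : ∀ x, V (tf, x) = ψ x)
    (ustar : ℝ → EuclideanSpace ℝ (Fin m)) (hu : Continuous ustar)
    (x₀ : EuclideanSpace ℝ (Fin n))
    (xstar : ℝ → EuclideanSpace ℝ (Fin n)) (hx₀ : xstar t₀ = x₀)
    (hx : ∀ t ∈ Set.Icc t₀ tf, HasDerivAt xstar (f t (xstar t) (ustar t)) t)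
    (heq : ∀ t ∈ Set.Icc t₀ tf,
      deriv (fun s => V (s, xstar t)) t + L t (xstar t) (ustar t) +
        ⟪gradient (fun y => V (t, y)) (xstar t), f t (xstar t) (ustar t)⟫ = 0) :
    V (t₀, x₀) = (∫ t in t₀..tf, L t (xstar t) (ustar t)) + ψ (xstar tf) := by
  have hV_along : ∀ t ∈ Set.Icc t₀ tf,
      HasDerivAt (fun s => V (s, xstar s)) (-L t (xstar t) (ustar t)) t := by
    intro t htI
    convert hasDerivAt_comp_graph (hV.differentiable one_ne_zero _) (hx t htI) using 1
    linarith [heq t htI]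
  have hxstar : ContinuousOn xstar (Set.Icc t₀ tf) := fun t htI =>
    (hx t htI).continuousAt.continuousWithinAt
  have hL_along : ContinuousOn (fun t => L t (xstar t) (ustar t)) (Set.Icc t₀ tf) :=
    hL.comp_continuousOn (continuousOn_id.prodMk (hxstar.prodMk hu.continuousOn))
  have hFTC := intervalIntegral.integral_eq_sub_of_hasDerivAt
    (by rwa [Set.uIcc_of_le ht]) (hL_along.neg.intervalIntegrable_of_Icc ht)
  simp only [Pi.neg_apply, intervalIntegral.integral_neg, hx₀, hVtf] at hFTC
  linarith

/-- Optimality via equality in the verification argument: under the hypotheses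
of the verification inequality, if a control `u*(·)` with trajectory `x*(·)`
achieves pointwise equality
`V_t + L(t, x*, u*) + ⟨∇ₓV(t, x*), f(t, x*, u*)⟩ = 0`, then
`V(t₀, x₀) = ∫ L(t, x*(t), u*(t)) dt + ψ(x*(t_f))`, i.e. `u*` is optimal. -/
theorem hjb_verification_equality {n m : ℕ}
    (t₀ tf : ℝ) (ht : t₀ ≤ tf)
    (U : Set (EuclideanSpace ℝ (Fin m)))
    (L : ℝ → EuclideanSpace ℝ (Fin n) → EuclideanSpace ℝ (Fin m) → ℝ)
    (hL : Continuous fun q : ℝ × EuclideanSpace ℝ (Fin n) × EuclideanSpace ℝ (Fin m) =>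
      L q.1 q.2.1 q.2.2)
    (f : ℝ → EuclideanSpace ℝ (Fin n) → EuclideanSpace ℝ (Fin m) →
      EuclideanSpace ℝ (Fin n))
    (hf : Continuous fun q : ℝ × EuclideanSpace ℝ (Fin n) × EuclideanSpace ℝ (Fin m) =>
      f q.1 q.2.1 q.2.2)
    (ψ : EuclideanSpace ℝ (Fin n) → ℝ)
    (V : ℝ × EuclideanSpace ℝ (Fin n) → ℝ) (hV : ContDiff ℝ 1 V)
    (hVtf : ∀ x, V (tf, x) = ψ x)
    (hHJB : ∀ (t : ℝ) (x : EuclideanSpace ℝ (Fin n)), ∀ u ∈ U,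
      0 ≤ deriv (fun s => V (s, x)) t + L t x u +
        ⟪gradient (fun y => V (t, y)) x, f t x u⟫)
    (ustar : ℝ → EuclideanSpace ℝ (Fin m)) (hu : Continuous ustar)
    (huU : ∀ t ∈ Set.Icc t₀ tf, ustar t ∈ U)
    (x₀ : EuclideanSpace ℝ (Fin n))
    (xstar : ℝ → EuclideanSpace ℝ (Fin n)) (hx₀ : xstar t₀ = x₀)
    (hx : ∀ t ∈ Set.Icc t₀ tf, HasDerivAt xstar (f t (xstar t) (ustar t)) t)
    (hxc : Continuous xstar)
    (heq : ∀ t ∈ Set.Icc t₀ tf,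
      deriv (fun s => V (s, xstar t)) t + L t (xstar t) (ustar t) +
        ⟪gradient (fun y => V (t, y)) (xstar t), f t (xstar t) (ustar t)⟫ = 0) :
    V (t₀, x₀) = (∫ t in t₀..tf, L t (xstar t) (ustar t)) + ψ (xstar tf) :=
  hjb_verification_equality_general t₀ tf ht L hL f ψ V hV hVtf ustar hu x₀ xstar hx₀ hx heq
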